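/- arXiv:0905.4769 — 9 statements merged into one kernel-verified Lean document; each statement's English description precedes it below -/
import Mathlib

section
/- The lattice A_4(C) = (1/2){x ∈ Z^n : x mod 4 ∈ C} obtained by Construction A from a linear Z4-code C of length n is integral (with respect to the standard inner product on R^n) if and only if C is self-orthogonal with respect to the Z4-valued inner product ⟨x,y⟩ = Σ x_i y_i. -/
/-! Writing `x · y` for the integer dot product, the inner product of `x/2` and `y/2` is
`(x · y) / 4`, which is an integer exactly when `x · y ≡ 0 (mod 4)`, i.e. when the reductions of
`x` and `y` mod 4 are orthogonal over `ℤ/4`. Every codeword lifts to an integer vector, so the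
integrality of all such inner products is the self-orthogonality of the code. -/

section

variable {ι : Type*} [Fintype ι]

lemma sum_half_mul_half_eq_div_four (x y : ι → ℤ) :
    ∑ i, ((x i : ℚ) / 2) * ((y i : ℚ) / 2) = ((∑ i, x i * y i : ℤ) : ℚ) / 4 := by
  push_cast
  rw [Finset.sum_div]
  exact Finset.sum_congr rfl fun i _ => by ring

lemma exists_int_eq_div_four_iff (k : ℤ) : (∃ m : ℤ, (k : ℚ) / 4 = m) ↔ (k : ZMod 4) = 0 := by
  rw [ZMod.intCast_zmod_eq_zero_iff_dvd]
  constructor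
  · rintro ⟨m, hm⟩
    exact ⟨m, by rw [mul_comm]; exact_mod_cast (div_eq_iff (by norm_num : (4 : ℚ) ≠ 0)).1 hm⟩
  · rintro ⟨m, rfl⟩
    exact ⟨m, by push_cast; ring⟩

lemma exists_int_eq_sum_half_mul_half_iff (x y : ι → ℤ) :
    (∃ m : ℤ, ∑ i, ((x i : ℚ) / 2) * ((y i : ℚ) / 2) = m) ↔
      ∑ i, (x i : ZMod 4) * (y i : ZMod 4) = 0 := by
  rw [sum_half_mul_half_eq_div_four, exists_int_eq_div_four_iff]
  push_cast
  rfl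

end

/-- The lattice `A₄(𝒞) = (1/2){x ∈ ℤⁿ : x mod 4 ∈ 𝒞}` obtained by
Construction A from a linear `ℤ₄`-code `𝒞` is integral iff `𝒞` is self-orthogonal. -/
theorem constructionA_integral_iff_selfOrthogonal (n : ℕ)
    (𝒞 : AddSubgroup (Fin n → ZMod 4)) :
    (∀ x y : Fin n → ℤ,
        (fun i => (x i : ZMod 4)) ∈ 𝒞 → (fun i => (y i : ZMod 4)) ∈ 𝒞 →
        ∃ m : ℤ, ∑ i, ((x i : ℚ) / 2) * ((y i : ℚ) / 2) = (m : ℚ)) ↔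
      (∀ c ∈ 𝒞, ∀ c' ∈ 𝒞, ∑ i, c i * c' i = 0) := by
  constructor
  · intro h c hc c' hc'
    have lift_cast (c : Fin n → ZMod 4) : (fun i => (((c i).cast : ℤ) : ZMod 4)) = c :=
      funext fun i => ZMod.intCast_zmod_cast (c i)
    have := (exists_int_eq_sum_half_mul_half_iff (fun i => (c i).cast) (fun i => (c' i).cast)).1
      (h _ _ ((lift_cast c).symm ▸ hc) ((lift_cast c').symm ▸ hc'))
    simpa only [ZMod.intCast_zmod_cast] using this
  · intro h x y hx hy
    exact (exists_int_eq_sum_half_mul_half_iff x y).2 (h _ hx _ hy)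
end

section
/- The lattice A_4(C) obtained by Construction A from a self-orthogonal linear Z4-code C of length n is an even lattice if and only if the Euclidean weight of every element of C is divisible by 8. -/
/-- The Euclidean weight of a `ℤ₄`-codeword: each entry is represented in `{0, ±1, 2}`
and the squares are summed (so entries of value 0,1,2,3 contribute 0,1,4,1). -/
def euclWt {n : ℕ} (c : Fin n → ZMod 4) : ℤ :=
  ∑ i, min (((c i).val : ℤ) ^ 2) ((4 - ((c i).val : ℤ)) ^ 2)

lemma sq_sub_w (x : ℤ) :
    (8:ℤ) ∣ x^2 - min ((((x : ZMod 4)).val : ℤ)^2) ((4 - (((x : ZMod 4)).val : ℤ))^2) := by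
  have hv : ((((x : ZMod 4)).val : ℤ)) = x % 4 := ZMod.val_intCast x
  set v : ℤ := (((x : ZMod 4)).val : ℤ) with hv'
  have h0 : 0 ≤ v := by rw [hv]; exact Int.emod_nonneg x (by norm_num)
  have h1 : v < 4 := by rw [hv]; exact Int.emod_lt_of_pos x (by norm_num)
  obtain ⟨q, hq⟩ : ∃ q, x = 4*q + v := ⟨x/4, by rw [hv]; omega⟩
  interval_cases v <;> subst hq <;> norm_num
  · exact ⟨2*q^2, by ring⟩
  · exact ⟨2*q^2 + q, by ring⟩
  · exact ⟨2*q^2 + 2*q, by ring⟩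
  · exact ⟨2*q^2 + 3*q + 1, by ring⟩

lemma keysum {n : ℕ} (x : Fin n → ℤ) :
    (8:ℤ) ∣ (∑ i, (x i)^2) - euclWt (fun i => (x i : ZMod 4)) := by
  rw [euclWt, ← Finset.sum_sub_distrib]
  exact Finset.dvd_sum fun i _ => sq_sub_w (x i)

/-- the lattice `A₄(𝒞)` obtained by Construction A from a self-orthogonal
linear `ℤ₄`-code `𝒞` is even iff the Euclidean weight of every codeword is divisible by 8. -/
theorem constructionA_even_iff_euclWt_div_eight (n : ℕ)
    (𝒞 : AddSubgroup (Fin n → ZMod 4))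
    (hso : ∀ c ∈ 𝒞, ∀ c' ∈ 𝒞, ∑ i, c i * c' i = 0) :
    (∀ x : Fin n → ℤ, (fun i => (x i : ZMod 4)) ∈ 𝒞 →
        ∃ m : ℤ, ∑ i, ((x i : ℚ) / 2) * ((x i : ℚ) / 2) = 2 * (m : ℚ)) ↔
      (∀ c ∈ 𝒞, (8 : ℤ) ∣ euclWt c) := by
  constructor
  · intro h c hc
    set x : Fin n → ℤ := fun i => ((c i).val : ℤ) with hx
    have hfun : (fun i => ((x i : ZMod 4))) = c := by
      funext i
      simp [hx, ZMod.natCast_val, ZMod.cast_id]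
    obtain ⟨m, hm⟩ := h x (by rw [hfun]; exact hc)
    have hS : (∑ i, (x i)^2 : ℤ) = 8 * m := by
      have : (∑ i, ((x i:ℚ))^2) = 8 * m := by
        calc ∑ i, ((x i:ℚ))^2
            = 4 * ∑ i, ((x i:ℚ)/2)*((x i:ℚ)/2) := by
              rw [Finset.mul_sum]; exact Finset.sum_congr rfl fun i _ => by ring
          _ = 4 * (2*m) := by rw [hm]
          _ = 8 * m := by ring
      exact_mod_cast this
    have := keysum x
    rw [hfun, hS] at this
    omega
  · intro h x hx
    obtain ⟨e, he⟩ := h _ hx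
    obtain ⟨k, hk⟩ := keysum x
    have hS : (∑ i, (x i)^2 : ℤ) = 8 * (k + e) := by omega
    refine ⟨k + e, ?_⟩
    have hQ : (∑ i, ((x i:ℚ))^2) = 8 * ((k:ℚ) + e) := by exact_mod_cast hS
    calc ∑ i, ((x i:ℚ)/2)*((x i:ℚ)/2)
        = (1/4) * ∑ i, ((x i:ℚ))^2 := by
          rw [Finset.mul_sum]; exact Finset.sum_congr rfl fun i _ => by ring
      _ = 2 * (((k + e) : ℤ) : ℚ) := by rw [hQ]; push_cast; ring
end

section
/- If C is a self-dual linear Z4-code of length n, then the binary codes C_0 and C_1 satisfy C_0 = C_1^⊥, where ⊥ denotes the dual with respect to the standard F_2-bilinear form. -/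
/-- The injection `ZMod 2 →+ ZMod 4`, `a ↦ 2 * a`. -/
def iotaHom : ZMod 2 →+ ZMod 4 where
  toFun a := 2 * ((a.val : ZMod 4))
  map_zero' := by decide
  map_add' := by decide

lemma iota_mul (x : ZMod 2) (z : ZMod 4) :
    2 * ((x.val : ZMod 4)) * z =
      iotaHom (x * ZMod.castHom (show (2:ℕ) ∣ 4 by norm_num) (ZMod 2) z) := by
  revert x z; decide

lemma iota_eq_zero_iff (x : ZMod 2) : iotaHom x = 0 ↔ x = 0 := by revert x; decide

/-- if `𝒞` is a self-dual linear `ℤ₄`-code then `𝒞₀ = 𝒞₁^⊥`. -/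
theorem C0_eq_dual_C1_of_selfDual (n : ℕ) (𝒞 : AddSubgroup (Fin n → ZMod 4))
    (hsd : ∀ x : Fin n → ZMod 4, x ∈ 𝒞 ↔ ∀ y ∈ 𝒞, ∑ i, x i * y i = 0) :
    {a : Fin n → ZMod 2 | (fun i => (2 * ((a i).val : ZMod 4))) ∈ 𝒞} =
      {x : Fin n → ZMod 2 |
        ∀ b : Fin n → ZMod 2,
          (∃ c ∈ 𝒞, b = fun i => ZMod.castHom (show (2:ℕ) ∣ 4 by norm_num) (ZMod 2) (c i)) →
          ∑ i, x i * b i = 0} := by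
  ext x
  simp only [Set.mem_setOf_eq]
  have key : ∀ c : Fin n → ZMod 4,
      (∑ i, 2 * (((x i).val : ZMod 4)) * c i) =
        iotaHom (∑ i, x i * ZMod.castHom (show (2:ℕ) ∣ 4 by norm_num) (ZMod 2) (c i)) := by
    intro c
    rw [map_sum]
    exact Finset.sum_congr rfl fun i _ => iota_mul (x i) (c i)
  constructor
  · rintro hx b ⟨c, hc, rfl⟩
    have h0 := ((hsd _).1 hx) c hc
    rw [key c] at h0
    exact (iota_eq_zero_iff _).1 h0
  · intro hx
    refine (hsd _).2 fun y hy => ?_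
    have h0 := hx _ ⟨y, hy, rfl⟩
    rw [key y, h0, map_zero]
end

section
/- If C is a linear Z4-code in which every element has Euclidean weight divisible by 8, then the binary code C_1 = {c mod 2 : c ∈ C} is doubly even, i.e., every codeword of C_1 has Hamming weight divisible by 4. -/
lemma term_mod4 (x : ZMod 4) :
    (4 : ℤ) ∣ min ((x.val : ℤ) ^ 2) ((4 - (x.val : ℤ)) ^ 2) -
      (if ZMod.castHom (show (2:ℕ) ∣ 4 by norm_num) (ZMod 2) x ≠ 0 then 1 else 0) := by
  fin_cases x <;> decide

/-- if every codeword of a linear `ℤ₄`-code `𝒞` has Euclidean weight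
divisible by 8, then the mod-2 reduction `𝒞₁` is doubly even. -/
theorem C1_doublyEven (n : ℕ) (𝒞 : AddSubgroup (Fin n → ZMod 4))
    (h8 : ∀ c ∈ 𝒞, (8 : ℤ) ∣ euclWt c) :
    ∀ c ∈ 𝒞,
      4 ∣ (Finset.univ.filter
        (fun i => ZMod.castHom (show (2:ℕ) ∣ 4 by norm_num) (ZMod 2) (c i) ≠ 0)).card := by
  intro c hc
  have h4 : (4 : ℤ) ∣ euclWt c := dvd_trans ⟨2, rfl⟩ (h8 c hc)
  set N := (Finset.univ.filter
      (fun i => ZMod.castHom (show (2:ℕ) ∣ 4 by norm_num) (ZMod 2) (c i) ≠ 0)).card with hN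
  have hNsum : (N : ℤ) = ∑ i : Fin n,
      (if ZMod.castHom (show (2:ℕ) ∣ 4 by norm_num) (ZMod 2) (c i) ≠ 0 then (1:ℤ) else 0) := by
    rw [hN, Finset.card_filter]
    push_cast
    rfl
  have hsub : (4 : ℤ) ∣ euclWt c - N := by
    rw [hNsum, euclWt, ← Finset.sum_sub_distrib]
    exact Finset.dvd_sum fun i _ => term_mod4 (c i)
  have : (4 : ℤ) ∣ (N : ℤ) := by
    have := dvd_sub h4 hsub
    simpa using this
  exact_mod_cast this
end

section
/- Let W = d(E_n) ⊆ F_2^{2n} with n > 8. Then the set of weight-4 codewords of the dual code W^⊥ coincides with the set of weight-4 codewords of W. -/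
/-- Hamming weight of a binary word. -/
def wt {n : ℕ} (v : Fin n → ZMod 2) : ℕ :=
  (Finset.univ.filter (fun i => v i ≠ 0)).card

/-- Size of the intersection of the supports of two binary words. -/
def interCard {n : ℕ} (v w : Fin n → ZMod 2) : ℕ :=
  (Finset.univ.filter (fun i => v i ≠ 0 ∧ w i ≠ 0)).card

/-- The doubling map `d : F₂ⁿ → F₂^{2n}`, `(c₁,…,cₙ) ↦ (c₁,c₁,c₂,c₂,…,cₙ,cₙ)`. -/
def dbl {n : ℕ} (c : Fin n → ZMod 2) : Fin (2 * n) → ZMod 2 :=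
  fun i => c ⟨(i : ℕ) / 2, by have := i.isLt; omega⟩

/-- The map `e : F₂ⁿ → F₂^{2n}`, `(c₁,…,cₙ) ↦ (0,c₁,0,c₂,…,0,cₙ)`. -/
def emap {n : ℕ} (c : Fin n → ZMod 2) : Fin (2 * n) → ZMod 2 :=
  fun i => if (i : ℕ) % 2 = 1 then c ⟨(i : ℕ) / 2, by have := i.isLt; omega⟩ else 0

/-- The even-weight code `𝓔ₙ ⊆ F₂ⁿ`. -/
def evenCode (n : ℕ) : Set (Fin n → ZMod 2) := {c | Even (wt c)}

def pairEquiv (n : ℕ) : Fin n × Fin 2 ≃ Fin (2*n) where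
  toFun p := ⟨2*p.1 + p.2, by have := p.1.isLt; have := p.2.isLt; omega⟩
  invFun i := (⟨(i:ℕ)/2, by have := i.isLt; omega⟩, ⟨(i:ℕ)%2, by omega⟩)
  left_inv p := by ext <;> simp <;> omega
  right_inv i := by apply Fin.ext; simp; omega

lemma sum_double {n : ℕ} {M : Type*} [AddCommMonoid M] (f : Fin (2*n) → M) :
    ∑ i, f i = ∑ j : Fin n, (f ⟨2*j, by have := j.isLt; omega⟩ + f ⟨2*j+1, by have := j.isLt; omega⟩) := by
  rw [← (pairEquiv n).sum_comp f, Fintype.sum_prod_type]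
  refine Finset.sum_congr rfl fun j _ => ?_
  rw [Fin.sum_univ_two]; rfl

lemma dbl_lo {n : ℕ} (c : Fin n → ZMod 2) (j : Fin n) :
    dbl c ⟨2*j, by have := j.isLt; omega⟩ = c j := by
  unfold dbl; congr 1; apply Fin.ext
  show (2*(j:ℕ))/2 = (j:ℕ); omega

lemma dbl_hi {n : ℕ} (c : Fin n → ZMod 2) (j : Fin n) :
    dbl c ⟨2*j+1, by have := j.isLt; omega⟩ = c j := by
  unfold dbl; congr 1; apply Fin.ext
  show (2*(j:ℕ)+1)/2 = (j:ℕ); omega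

lemma wt_eq_sum {n : ℕ} (v : Fin n → ZMod 2) :
    wt v = ∑ i, if v i ≠ 0 then 1 else 0 := by
  rw [wt, Finset.card_filter]

lemma wt_dbl {n : ℕ} (c : Fin n → ZMod 2) : wt (dbl c) = 2 * wt c := by
  rw [wt_eq_sum, sum_double, wt_eq_sum, Finset.mul_sum]
  refine Finset.sum_congr rfl fun j _ => ?_
  rw [dbl_lo, dbl_hi]; ring

/-- for `n > 8`, the weight-4 codewords of the dual of `W = d(𝓔ₙ)` are
exactly the weight-4 codewords of `W`. -/
theorem dual_weight_four_eq_weight_four (n : ℕ) (hn : 8 < n) :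
    {x : Fin (2 * n) → ZMod 2 |
        (∀ w ∈ dbl '' evenCode n, ∑ i, x i * w i = 0) ∧ wt x = 4} =
      {w : Fin (2 * n) → ZMod 2 | w ∈ dbl '' evenCode n ∧ wt w = 4} := by
  ext x
  simp only [Set.mem_setOf_eq]
  constructor
  · rintro ⟨horth, hwt⟩
    set s : Fin n → ZMod 2 := fun j =>
      x ⟨2*j, by have := j.isLt; omega⟩ + x ⟨2*j+1, by have := j.isLt; omega⟩ with hs
    have hsval : ∀ j : Fin n, s j =
        x ⟨2*j, by have := j.isLt; omega⟩ + x ⟨2*j+1, by have := j.isLt; omega⟩ :=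
      fun j => rfl
    have key : ∀ j k : Fin n, j ≠ k → s j + s k = 0 := by
      intro j k hjk
      set c : Fin n → ZMod 2 := fun t => (if t = j then 1 else 0) + (if t = k then 1 else 0) with hc
      have hcval : ∀ t, (c t ≠ 0) ↔ (t = j ∨ t = k) := by
        intro t
        rcases eq_or_ne t j with rfl | h1
        · simp [hc, hjk]
        · rcases eq_or_ne t k with rfl | h2
          · simp [hc, h1]
          · simp [hc, h1, h2]
      have hcwt : wt c = 2 := by
        have : Finset.univ.filter (fun t => c t ≠ 0) = {j, k} := by
          ext t; simp [hcval t]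
        rw [wt, this, Finset.card_insert_of_notMem (by simp [hjk]), Finset.card_singleton]
      have hmem : dbl c ∈ dbl '' evenCode n := ⟨c, by simp [evenCode, hcwt], rfl⟩
      have h0 := horth _ hmem
      rw [sum_double] at h0
      have hterm : ∀ t : Fin n,
          x ⟨2*t, by have := t.isLt; omega⟩ * dbl c ⟨2*t, by have := t.isLt; omega⟩ +
          x ⟨2*t+1, by have := t.isLt; omega⟩ * dbl c ⟨2*t+1, by have := t.isLt; omega⟩ =
          s t * c t := by
        intro t; rw [dbl_lo, dbl_hi, hsval]; ring
      rw [Finset.sum_congr rfl (fun t _ => hterm t)] at h0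
      have hsum : ∑ t, s t * c t = s j + s k := by
        simp only [hc, mul_add, mul_ite, mul_one, mul_zero, Finset.sum_add_distrib,
          Finset.sum_ite_eq', Finset.mem_univ, if_true]
      rwa [hsum] at h0
    by_cases hzero : ∀ j, s j = 0
    · set c : Fin n → ZMod 2 := fun j => x ⟨2*j, by have := j.isLt; omega⟩ with hc
      have hxc : x = dbl c := by
        funext i
        have hi := i.isLt
        have hlt : (i:ℕ)/2 < n := by omega
        have hz := hzero ⟨(i:ℕ)/2, hlt⟩
        rw [hsval] at hz
        have hxx : x ⟨2*((i:ℕ)/2)+1, by omega⟩ = x ⟨2*((i:ℕ)/2), by omega⟩ := by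
          have h2 : ∀ a b : ZMod 2, a + b = 0 → b = a := by decide
          exact h2 _ _ hz
        have hd : dbl c i = x ⟨2*((i:ℕ)/2), by omega⟩ := rfl
        rw [hd]
        have hm : (i:ℕ)%2 = 0 ∨ (i:ℕ)%2 = 1 := by omega
        rcases hm with hm | hm
        · congr 1; apply Fin.ext; show (i:ℕ) = 2*((i:ℕ)/2); omega
        · rw [← hxx]; congr 1; apply Fin.ext; show (i:ℕ) = 2*((i:ℕ)/2)+1; omega
      refine ⟨⟨c, ?_, hxc.symm⟩, hwt⟩
      have h2 : wt x = 2 * wt c := by rw [hxc, wt_dbl]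
      have h3 : wt c = 2 := by omega
      simp only [evenCode, Set.mem_setOf_eq, h3]
      decide
    · exfalso
      push_neg at hzero
      obtain ⟨j0, hj0⟩ := hzero
      have hall : ∀ j, s j ≠ 0 := by
        intro j hj
        rcases eq_or_ne j j0 with rfl | hne
        · exact hj0 hj
        · have := key j j0 hne
          rw [hj, zero_add] at this
          exact hj0 this
      have hwit : ∀ j : Fin n, ∃ i : Fin (2*n), x i ≠ 0 ∧ (i:ℕ)/2 = (j:ℕ) := by
        intro j
        by_cases h1 : x ⟨2*j, by have := j.isLt; omega⟩ ≠ 0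
        · exact ⟨_, h1, by show (2*(j:ℕ))/2 = (j:ℕ); omega⟩
        · refine ⟨⟨2*j+1, by have := j.isLt; omega⟩, ?_, by show (2*(j:ℕ)+1)/2 = (j:ℕ); omega⟩
          intro h2
          apply hall j
          push_neg at h1
          rw [hsval, h1, h2, add_zero]
      choose f hf1 hf2 using hwit
      have hinj : Function.Injective f := by
        intro a b hab
        apply Fin.ext
        have := hf2 a; rw [hab] at this; rw [← this, hf2 b]
      have hle : n ≤ wt x := by
        rw [wt]
        calc n = (Finset.univ : Finset (Fin n)).card := by simp
        _ ≤ _ := Finset.card_le_card_of_injOn f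
              (fun a _ => by simp [hf1 a]) (fun a _ b _ h => hinj h)
      omega
  · rintro ⟨⟨c, hc, rfl⟩, hwt⟩
    refine ⟨?_, hwt⟩
    rintro w ⟨c', hc', rfl⟩
    rw [sum_double]
    have hterm : ∀ j : Fin n,
        dbl c ⟨2*j, by have := j.isLt; omega⟩ * dbl c' ⟨2*j, by have := j.isLt; omega⟩ +
        dbl c ⟨2*j+1, by have := j.isLt; omega⟩ * dbl c' ⟨2*j+1, by have := j.isLt; omega⟩ = 0 := by
      intro j
      rw [dbl_lo, dbl_hi, dbl_lo, dbl_hi]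
      exact CharTwo.add_self_eq_zero _
    rw [Finset.sum_congr rfl (fun j _ => hterm j), Finset.sum_const, smul_zero]
end

section
/- The dual of the code d(E_n) ⊆ F_2^{2n} equals the span of d(F_2^n) and the vector e(1^n) = (0,1,0,1,...,0,1); moreover, if n > 2 the set of weight-2 codewords of d(E_n)^⊥ is exactly {d(x) : x ∈ F_2^n of weight 1}. -/
/-! Split the coordinates of `F₂^{2n}` into the pairs `(2j, 2j+1)` and let `pairSum x ∈ F₂ⁿ`
record the pair sums of `x`. Then `⟪x, d c⟫ = ⟪pairSum x, c⟫`, so `x ⊥ d(𝓔ₙ)` iff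
`pairSum x ⊥ 𝓔ₙ`, i.e. iff `pairSum x` is constant; testing against `e_j + e_k` shows
`𝓔ₙ^⊥ = {0, 1ⁿ}`. A word whose pair sums all equal `t` is `t • e(1ⁿ) + d(c)` with `c` its even
coordinates. Finally `d(c)` has weight `2 wt c`, while `e(1ⁿ) + d(c)` has exactly one nonzero
entry in each pair, hence weight `n > 2`. -/

def pairIdx {n : ℕ} (j : Fin n) (b : Fin 2) : Fin (2 * n) :=
  ⟨2 * j + b, by have := j.isLt; have := b.isLt; omega⟩

lemma sum_eq_sum_pairIdx {M : Type*} [AddCommMonoid M] {n : ℕ} (f : Fin (2 * n) → M) :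
    ∑ i, f i = ∑ j, ∑ b, f (pairIdx j b) := by
  let e : Fin n × Fin 2 ≃ Fin (2 * n) := finProdFinEquiv.trans (finCongr (Nat.mul_comm n 2))
  have he : ∀ p, e p = pairIdx p.1 p.2 := fun p => Fin.ext (by simp [e, pairIdx]; ring)
  rw [← e.sum_comp, Fintype.sum_prod_type]
  simp only [he]

lemma pairIdx_div_mod {n : ℕ} (i : Fin (2 * n)) :
    pairIdx ⟨i / 2, by omega⟩ ⟨i % 2, by omega⟩ = i :=
  Fin.ext (by simp only [pairIdx]; omega)

lemma funext_pairIdx {M : Type*} {n : ℕ} {f g : Fin (2 * n) → M}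
    (h : ∀ j b, f (pairIdx j b) = g (pairIdx j b)) : f = g :=
  funext fun i => by rw [← pairIdx_div_mod i]; exact h _ _

lemma pairIdx_div_two {n : ℕ} (j : Fin n) (b : Fin 2) : (pairIdx j b : ℕ) / 2 = j := by
  simp only [pairIdx]
  omega

lemma dbl_pairIdx {n : ℕ} (c : Fin n → ZMod 2) (j : Fin n) (b : Fin 2) :
    dbl c (pairIdx j b) = c j := by
  simp only [dbl, pairIdx_div_two]

lemma emap_pairIdx {n : ℕ} (c : Fin n → ZMod 2) (j : Fin n) (b : Fin 2) :
    emap c (pairIdx j b) = if b = 1 then c j else 0 := by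
  have hmod : (pairIdx j b : ℕ) % 2 = b := by simp only [pairIdx]; omega
  simp only [emap, pairIdx_div_two, hmod, Fin.ext_iff, Fin.val_one]

def pairSum {n : ℕ} (x : Fin (2 * n) → ZMod 2) (j : Fin n) : ZMod 2 :=
  ∑ b, x (pairIdx j b)

lemma sum_mul_dbl {n : ℕ} (x : Fin (2 * n) → ZMod 2) (c : Fin n → ZMod 2) :
    ∑ i, x i * dbl c i = ∑ j, pairSum x j * c j := by
  simp only [sum_eq_sum_pairIdx fun i => x i * dbl c i, dbl_pairIdx, pairSum, Finset.sum_mul]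

lemma exists_eq_smul_emap_add_dbl_iff {n : ℕ} (x : Fin (2 * n) → ZMod 2) (t : ZMod 2) :
    (∃ c, x = t • emap (fun _ : Fin n => 1) + dbl c) ↔ ∀ j, pairSum x j = t := by
  constructor
  · rintro ⟨c, rfl⟩ j
    simp only [pairSum, Fin.sum_univ_two, Pi.add_apply, Pi.smul_apply, smul_eq_mul, dbl_pairIdx,
      emap_pairIdx]
    grind
  · intro h
    refine ⟨fun j => x (pairIdx j 0), funext_pairIdx fun j b => ?_⟩
    have hj := h j
    simp only [pairSum, Fin.sum_univ_two] at hj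
    fin_cases b
    · simp [dbl_pairIdx, emap_pairIdx]
    · simp only [Fin.mk_one, Pi.add_apply, Pi.smul_apply, smul_eq_mul, dbl_pairIdx, emap_pairIdx,
        ← hj, if_true, mul_one]
      grind

lemma sum_eq_wt {n : ℕ} (c : Fin n → ZMod 2) : ∑ j, c j = (wt c : ZMod 2) := by
  rw [wt, Finset.natCast_card_filter]
  refine Finset.sum_congr rfl fun j _ => ?_
  generalize c j = a
  decide +revert

lemma mem_evenCode_iff_sum_eq_zero {n : ℕ} (c : Fin n → ZMod 2) :
    c ∈ evenCode n ↔ ∑ j, c j = 0 := by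
  rw [sum_eq_wt, ZMod.natCast_eq_zero_iff_even]
  rfl

lemma forall_evenCode_sum_mul_eq_zero_iff {n : ℕ} (y : Fin n → ZMod 2) :
    (∀ c ∈ evenCode n, ∑ j, y j * c j = 0) ↔ ∃ t, ∀ j, y j = t := by
  constructor
  · intro h
    rcases isEmpty_or_nonempty (Fin n) with hn | ⟨⟨k⟩⟩
    · exact ⟨0, isEmptyElim⟩
    refine ⟨y k, fun j => ?_⟩
    have hjk : Pi.single j 1 + Pi.single k 1 ∈ evenCode n := by
      rw [mem_evenCode_iff_sum_eq_zero]
      simp only [Pi.add_apply, Finset.sum_add_distrib, Finset.sum_pi_single', Finset.mem_univ,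
        if_true]
      exact CharTwo.add_self_eq_zero 1
    simpa [mul_add, Finset.sum_add_distrib, Pi.single_apply, CharTwo.add_eq_zero] using h _ hjk
  · rintro ⟨t, ht⟩ c hc
    simp only [ht, ← Finset.mul_sum, (mem_evenCode_iff_sum_eq_zero c).1 hc, mul_zero]

lemma forall_dbl_evenCode_sum_mul_eq_zero_iff {n : ℕ} (x : Fin (2 * n) → ZMod 2) :
    (∀ w ∈ dbl '' evenCode n, ∑ i, x i * w i = 0) ↔
      ∃ (t : ZMod 2) (c : Fin n → ZMod 2), x = t • emap (fun _ : Fin n => 1) + dbl c := by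
  simp only [Set.forall_mem_image, sum_mul_dbl, forall_evenCode_sum_mul_eq_zero_iff,
    exists_eq_smul_emap_add_dbl_iff]

def dblLinearMap (n : ℕ) : (Fin n → ZMod 2) →ₗ[ZMod 2] (Fin (2 * n) → ZMod 2) where
  toFun := dbl
  map_add' _ _ := rfl
  map_smul' _ _ := rfl

lemma mem_span_range_dbl_union_emap_iff {n : ℕ} (x : Fin (2 * n) → ZMod 2) :
    x ∈ Submodule.span (ZMod 2) (Set.range (dbl (n := n)) ∪ {emap (fun _ : Fin n => 1)}) ↔
      ∃ (t : ZMod 2) (c : Fin n → ZMod 2), x = t • emap (fun _ : Fin n => 1) + dbl c := by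
  have hrange : Set.range (dbl (n := n)) = LinearMap.range (dblLinearMap n) :=
    (LinearMap.coe_range (dblLinearMap n)).symm
  simp only [Set.union_singleton, Submodule.mem_span_insert, hrange, Submodule.span_eq,
    LinearMap.mem_range, exists_exists_eq_and]
  rfl

lemma wt_eq_sum_pairIdx {n : ℕ} (x : Fin (2 * n) → ZMod 2) :
    wt x = ∑ j, ∑ b, if x (pairIdx j b) ≠ 0 then 1 else 0 := by
  rw [wt, Finset.card_filter, sum_eq_sum_pairIdx]

lemma wt_emap_one_add_dbl {n : ℕ} (c : Fin n → ZMod 2) :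
    wt (emap (fun _ : Fin n => 1) + dbl c) = n := by
  have hpair : ∀ j, ∑ b, (if (emap (fun _ : Fin n => 1) + dbl c) (pairIdx j b) ≠ 0 then 1 else 0)
      = 1 := by
    intro j
    simp only [Fin.sum_univ_two, Pi.add_apply, emap_pairIdx, dbl_pairIdx]
    generalize c j = a
    decide +revert
  rw [wt_eq_sum_pairIdx, Finset.sum_congr rfl fun j _ => hpair j]
  simp

/-- the dual of `d(𝓔ₙ)` is the span of `d(F₂ⁿ)` together with
`e(1ⁿ) = (0,1,0,1,…,0,1)`; moreover, for `n > 2` its weight-2 codewords are exactly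
the `d(x)` for `x` of weight 1. -/
theorem dual_dblEven_description (n : ℕ) :
    let dualW : Set (Fin (2 * n) → ZMod 2) :=
      {x | ∀ w ∈ dbl '' evenCode n, ∑ i, x i * w i = 0}
    dualW = ↑(Submodule.span (ZMod 2)
        (Set.range (dbl (n := n)) ∪ {emap (fun _ : Fin n => 1)})) ∧
    (2 < n →
      {x ∈ dualW | wt x = 2} =
        {v : Fin (2 * n) → ZMod 2 | ∃ c : Fin n → ZMod 2, wt c = 1 ∧ v = dbl c}) := by
  intro dualW
  have hdual : ∀ x, x ∈ dualW ↔
      ∃ (t : ZMod 2) (c : Fin n → ZMod 2), x = t • emap (fun _ : Fin n => 1) + dbl c :=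
    forall_dbl_evenCode_sum_mul_eq_zero_iff
  refine ⟨Set.ext fun x => (hdual x).trans (mem_span_range_dbl_union_emap_iff x).symm,
    fun hn => Set.ext fun x => ?_⟩
  simp only [hdual, Set.mem_ofPred_eq]
  constructor
  · rintro ⟨⟨t, c, rfl⟩, hwt⟩
    obtain rfl | rfl := (by decide : ∀ a : ZMod 2, a = 0 ∨ a = 1) t
    · rw [zero_smul, zero_add, wt_dbl] at hwt
      exact ⟨c, by omega, by rw [zero_smul, zero_add]⟩
    · rw [one_smul, wt_emap_one_add_dbl] at hwt
      omega
  · rintro ⟨c, hc, rfl⟩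
    exact ⟨⟨0, c, by rw [zero_smul, zero_add]⟩, by rw [wt_dbl, hc]⟩
end

section
/- Let n be even, let s_1,...,s_{n/2−1} be weight-4 vectors in F_2^n with |supp(s_i) ∩ supp(s_j)| = 2 if |i−j| = 1 and = 0 otherwise (i ≠ j), and let t_1,...,t_{n/2} be weight-2 vectors with s_i = t_i + t_{i+1}. Then the F_2-span of {d(t_i) : 1 ≤ i ≤ n/2} ∪ {e(s_j) : 1 ≤ j ≤ n/2−1} in F_2^{2n} is a code equivalent (isomorphic as a code, via a coordinate permutation) to d(E_n). -/
/-!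
Writing `sᵢ = tᵢ + tᵢ₊₁` with weights `4 = 2 + 2` makes the supports of consecutive `tᵢ` disjoint,
with `supp sᵢ = supp tᵢ ∪ supp tᵢ₊₁`; then `|supp sᵢ ∩ supp sᵢ₊₁| = 2` forces
`supp sᵢ ∩ supp sᵢ₊₁ = supp tᵢ₊₁`, and together with the vanishing intersections all the supports
of the `tᵢ` are disjoint. So the `tᵢ` are the indicators of pairs `{aᵢ, bᵢ}` partitioning the `2m`
coordinates. Regroup the `4m` coordinates of `F₂^{4m}` into the pairs
`{copy r of aᵢ, copy r of bᵢ}`, labelled `(i, r)`: then `d(tᵢ)` becomes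
`d(e_{(i,0)} + e_{(i,1)})` and `e(sⱼ)` becomes `d(e_{(j,1)} + e_{(j+1,1)})`. These are the edge
vectors of a comb, a connected graph on the `2m` labels, and the edge vectors of a connected graph
span the even-weight code.
-/

open Finset Function

namespace BinaryCode

def supp {ι : Type*} [Fintype ι] (v : ι → ZMod 2) : Finset ι := {i | v i ≠ 0}

lemma eq_one_of_ne_zero {x : ZMod 2} : x ≠ 0 → x = 1 := by
  revert x; decide

lemma wt_eq_card_supp {n : ℕ} (v : Fin n → ZMod 2) : wt v = #(supp v) := rfl

lemma interCard_eq_card_inter {n : ℕ} (v w : Fin n → ZMod 2) :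
    interCard v w = #(supp v ∩ supp w) := by
  simp only [interCard, supp, filter_and]

lemma mem_evenCode_iff {n : ℕ} (c : Fin n → ZMod 2) : c ∈ evenCode n ↔ ∑ k, c k = 0 := by
  have hc : ∀ k, c k = if c k ≠ 0 then 1 else 0 := fun k => by
    split_ifs with h
    · exact eq_one_of_ne_zero h
    · exact not_not.1 h
  rw [evenCode, Set.mem_ofPred_eq, sum_congr rfl fun k _ => hc k, sum_boole,
    ZMod.natCast_eq_zero_iff_even]
  rfl

section Support

variable {ι : Type*} [Fintype ι] {u v : ι → ZMod 2} {k : ι}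

lemma apply_eq_one_of_mem_supp (h : k ∈ supp v) : v k = 1 :=
  eq_one_of_ne_zero (by simpa [supp] using h)

lemma apply_eq_zero_of_notMem_supp (h : k ∉ supp v) : v k = 0 := by
  simpa [supp] using h

variable [DecidableEq ι]

lemma supp_add_subset : supp (u + v) ⊆ supp u ∪ supp v := by
  intro k hk
  by_contra h
  simp_all [supp]

lemma disjoint_supp_and_supp_add_eq (h : #(supp (u + v)) = #(supp u) + #(supp v)) :
    Disjoint (supp u) (supp v) ∧ supp (u + v) = supp u ∪ supp v := by
  have heq : supp (u + v) = supp u ∪ supp v :=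
    eq_of_subset_of_card_le supp_add_subset (h ▸ card_union_le _ _)
  exact ⟨card_union_eq_card_add_card.1 (heq ▸ h), heq⟩

end Support

lemma _root_.Finset.disjoint_of_card_union_inter_le {α : Type*} [DecidableEq α] {A B C : Finset α}
    (hAB : Disjoint A B) (h : #((A ∪ B) ∩ (B ∪ C)) ≤ #B) : Disjoint A C := by
  have hB : B = (A ∪ B) ∩ (B ∪ C) :=
    eq_of_subset_of_card_le (subset_inter subset_union_right subset_union_left) h
  refine disjoint_left.2 fun x hxA hxC => disjoint_left.1 hAB hxA ?_
  rw [hB]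
  exact mem_inter.2 ⟨mem_union_left _ hxA, mem_union_right _ hxC⟩

theorem pairwise_disjoint_of_chain {α : Type*} [DecidableEq α] {m : ℕ} (T : Fin m → Finset α)
    (hT : ∀ i, #(T i) = 2)
    (hadj : ∀ i : Fin (m - 1),
      Disjoint (T ⟨i, by have := i.isLt; omega⟩) (T ⟨i + 1, by have := i.isLt; omega⟩))
    (hinter : ∀ i j : Fin (m - 1), i ≠ j →
      #((T ⟨i, by have := i.isLt; omega⟩ ∪ T ⟨i + 1, by have := i.isLt; omega⟩) ∩
        (T ⟨j, by have := j.isLt; omega⟩ ∪ T ⟨j + 1, by have := j.isLt; omega⟩)) =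
        if (i : ℕ) + 1 = j ∨ (j : ℕ) + 1 = i then 2 else 0) :
    Pairwise (Disjoint on T) := by
  have key : ∀ a b (ha : a < m) (hb : b < m), a < b → Disjoint (T ⟨a, ha⟩) (T ⟨b, hb⟩) := by
    intro a b ha hb hab
    obtain rfl | rfl | hfar : b = a + 1 ∨ b = a + 2 ∨ a + 3 ≤ b := by omega
    · exact hadj ⟨a, by omega⟩
    · refine disjoint_of_card_union_inter_le (hadj ⟨a, by omega⟩) ?_
      have h := hinter ⟨a, by omega⟩ ⟨a + 1, by omega⟩ (by simp)
      rw [if_pos (Or.inl rfl)] at h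
      exact (h.trans (hT _).symm).le
    · obtain ⟨c, rfl⟩ : ∃ c, b = c + 1 := ⟨b - 1, by omega⟩
      have h := hinter ⟨a, by omega⟩ ⟨c, by omega⟩ (by simp [Fin.ext_iff]; omega)
      rw [if_neg (by simp only; omega), card_eq_zero, ← disjoint_iff_inter_eq_empty] at h
      exact h.mono subset_union_left subset_union_right
  intro i j hij
  rcases lt_or_gt_of_ne hij with h | h
  · exact key _ _ i.isLt j.isLt h
  · exact (key _ _ j.isLt i.isLt h).symm

theorem pairwise_disjoint_supp {m n : ℕ} {s : Fin (m - 1) → Fin n → ZMod 2}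
    {t : Fin m → Fin n → ZMod 2}
    (hs4 : ∀ i, wt (s i) = 4) (ht2 : ∀ i, wt (t i) = 2)
    (hst : ∀ i : Fin (m - 1),
      s i = t ⟨(i : ℕ), by have := i.isLt; omega⟩ + t ⟨(i : ℕ) + 1, by have := i.isLt; omega⟩)
    (hint : ∀ i j : Fin (m - 1), i ≠ j →
      interCard (s i) (s j) =
        if (i : ℕ) + 1 = (j : ℕ) ∨ (j : ℕ) + 1 = (i : ℕ) then 2 else 0) :
    Pairwise (Disjoint on fun i => supp (t i)) := by
  have hsplit (i : Fin (m - 1)) := disjoint_supp_and_supp_add_eq (u := t ⟨i, by omega⟩)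
    (v := t ⟨i + 1, by omega⟩) (by simp only [← wt_eq_card_supp, ← hst i, hs4, ht2])
  refine pairwise_disjoint_of_chain _ ht2 (fun i => (hsplit i).1) fun i j hij => ?_
  rw [← (hsplit i).2, ← (hsplit j).2, ← hst i, ← hst j, ← interCard_eq_card_inter]
  exact hint i j hij

theorem exists_prod_equiv_apply_eq_ite {κ ι : Type*} [Fintype κ] [DecidableEq κ] [Fintype ι]
    [DecidableEq ι] {t : κ → ι → ZMod 2} (hcard : Fintype.card ι = Fintype.card κ * 2)
    (ht : ∀ i, #(supp (t i)) = 2) (hdisj : Pairwise (Disjoint on fun i => supp (t i))) :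
    ∃ ψ : κ × Fin 2 ≃ ι, ∀ i q, t i (ψ q) = if q.1 = i then 1 else 0 := by
  choose a b hab hsupp using fun i => card_eq_two.1 (ht i)
  let ψ : κ × Fin 2 → ι := fun q => ![a q.1, b q.1] q.2
  have hψ (q : κ × Fin 2) : ψ q ∈ supp (t q.1) := by
    obtain ⟨i, r⟩ := q
    fin_cases r <;> simp [ψ, hsupp]
  have hinj : Injective ψ := by
    rintro ⟨i, r⟩ ⟨j, r'⟩ h
    obtain rfl : i = j := by
      by_contra hij
      exact disjoint_left.1 (hdisj hij) (hψ (i, r)) (h ▸ hψ (j, r'))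
    have := hab i
    fin_cases r <;> fin_cases r' <;> simp_all [ψ, eq_comm]
  refine ⟨.ofBijective ψ ((Fintype.bijective_iff_injective_and_card ψ).2 ⟨hinj, by simp [hcard]⟩),
    fun i q => ?_⟩
  split_ifs with h
  · exact apply_eq_one_of_mem_supp (h ▸ hψ q)
  · exact apply_eq_zero_of_notMem_supp (disjoint_left.1 (hdisj h) (hψ q))

theorem mem_of_sum_eq_zero {R ι : Type*} [Ring R] [Fintype ι] [DecidableEq ι]
    {S : Submodule R (ι → R)} (o : ι) (hS : ∀ k, Pi.single k 1 - Pi.single o 1 ∈ S)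
    {v : ι → R} (hv : ∑ k, v k = 0) : v ∈ S := by
  have hv' : v = ∑ k, v k • (Pi.single k 1 - Pi.single o 1) := by
    simp only [smul_sub, sum_sub_distrib, ← sum_smul, hv, zero_smul, sub_zero]
    ext x
    simp [Finset.sum_apply, Pi.single_apply]
  rw [hv']
  exact sum_mem fun k _ => S.smul_mem _ (hS k)

/-- `(k, r) ↦ 2k + r`, so that the `k`-th pair of coordinates of `F^{2n}` is `{(k, 0), (k, 1)}`. -/
def pairEquiv (n : ℕ) : Fin n × Fin 2 ≃ Fin (2 * n) :=
  finProdFinEquiv.trans (finCongr (Nat.mul_comm n 2))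

@[simp] lemma dbl_pairEquiv {n : ℕ} (c : Fin n → ZMod 2) (k : Fin n) (r : Fin 2) :
    dbl c (pairEquiv n (k, r)) = c k := by
  simp only [dbl]
  congr
  simp [pairEquiv]
  omega

@[simp] lemma emap_pairEquiv {n : ℕ} (c : Fin n → ZMod 2) (k : Fin n) (r : Fin 2) :
    emap c (pairEquiv n (k, r)) = if r = 1 then c k else 0 := by
  simp only [emap]
  fin_cases r
  · simp [pairEquiv]
  · simp [pairEquiv]
    congr
    omega

lemma funext_pairEquiv_pairEquiv {α : Type*} {m : ℕ} {f g : Fin (2 * (2 * m)) → α}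
    (h : ∀ i r r',
      f (pairEquiv _ (pairEquiv m (i, r), r')) = g (pairEquiv _ (pairEquiv m (i, r), r'))) :
    f = g := by
  funext x
  obtain ⟨⟨k, r'⟩, rfl⟩ := (pairEquiv _).surjective x
  obtain ⟨⟨i, r⟩, rfl⟩ := (pairEquiv m).surjective k
  exact h i r r'

section Comb

variable (R : Type*) [Ring R] (m : ℕ)

/-- The edge vectors `e_x - e_y` of the comb on `Fin m × Fin 2` with teeth `(j, 0) – (j, 1)` and
spine `(j, 1) – (j + 1, 1)`, vertices being numbered by `pairEquiv`. -/
def combEdges : Set (Fin (2 * m) → R) :=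
  Set.range (fun j : Fin m =>
      Pi.single (pairEquiv m (j, 0)) (1 : R) - Pi.single (pairEquiv m (j, 1)) 1) ∪
    Set.range (fun j : Fin (m - 1) =>
      Pi.single (pairEquiv m (⟨j, by have := j.isLt; omega⟩, 1)) (1 : R) -
        Pi.single (pairEquiv m (⟨j + 1, by have := j.isLt; omega⟩, 1)) 1)

variable {R m}

lemma single_sub_single_mem_span_combEdges (hm : 0 < m) (q : Fin m × Fin 2) :
    Pi.single (pairEquiv m q) (1 : R) - Pi.single (pairEquiv m (⟨0, hm⟩, 1)) 1 ∈
      Submodule.span R (combEdges R m) := by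
  set S := Submodule.span R (combEdges R m)
  have tooth (j : Fin m) :
      Pi.single (pairEquiv m (j, 0)) (1 : R) - Pi.single (pairEquiv m (j, 1)) 1 ∈ S :=
    Submodule.subset_span (Or.inl ⟨j, rfl⟩)
  obtain ⟨⟨i, hi⟩, r⟩ := q
  induction i generalizing r with
  | zero =>
    fin_cases r
    · exact tooth _
    · simp
  | succ i ih =>
    have spine : Pi.single (pairEquiv m (⟨i, by omega⟩, 1)) (1 : R) -
        Pi.single (pairEquiv m (⟨i + 1, hi⟩, 1)) 1 ∈ S :=
      Submodule.subset_span (Or.inr ⟨⟨i, by omega⟩, rfl⟩)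
    have h1 : Pi.single (pairEquiv m (⟨i + 1, hi⟩, 1)) (1 : R) -
        Pi.single (pairEquiv m (⟨0, hm⟩, 1)) 1 ∈ S := by
      simpa only [sub_sub_sub_cancel_left] using S.sub_mem (ih 1 (by omega)) spine
    have h0 : Pi.single (pairEquiv m (⟨i + 1, hi⟩, 0)) (1 : R) -
        Pi.single (pairEquiv m (⟨0, hm⟩, 1)) 1 ∈ S := by
      simpa only [sub_add_sub_cancel] using S.add_mem (tooth ⟨i + 1, hi⟩) h1
    fin_cases r
    · exact h0
    · exact h1

theorem mem_span_combEdges_iff (hm : 0 < m) (v : Fin (2 * m) → R) :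
    v ∈ Submodule.span R (combEdges R m) ↔ ∑ k, v k = 0 := by
  refine ⟨fun hv => ?_, fun hv => ?_⟩
  · have hle : Submodule.span R (combEdges R m) ≤ LinearMap.ker (∑ k, LinearMap.proj k) := by
      rw [Submodule.span_le]
      rintro _ (⟨j, rfl⟩ | ⟨j, rfl⟩) <;> simp [Finset.sum_apply]
    simpa [Finset.sum_apply] using hle hv
  · refine mem_of_sum_eq_zero (pairEquiv m (⟨0, hm⟩, 1)) (fun k => ?_) hv
    obtain ⟨q, rfl⟩ := (pairEquiv m).surjective k
    exact single_sub_single_mem_span_combEdges hm q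

end Comb

def dblLinear (n : ℕ) : (Fin n → ZMod 2) →ₗ[ZMod 2] (Fin (2 * n) → ZMod 2) where
  toFun := dbl
  map_add' _ _ := rfl
  map_smul' _ _ := rfl

@[simp] lemma dblLinear_apply {n : ℕ} (c : Fin n → ZMod 2) : dblLinear n c = dbl c := rfl

def prodSwapRight (α β γ : Type*) : (α × β) × γ ≃ (α × γ) × β where
  toFun q := ((q.1.1, q.2), q.1.2)
  invFun q := ((q.1.1, q.2), q.1.2)
  left_inv _ := rfl
  right_inv _ := rfl

/-- Coordinate `r'` of the target pair numbered `(i, r)` is copy `r` of the source coordinate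
`ψ (i, r')`. -/
def codePerm {m : ℕ} (ψ : Fin m × Fin 2 ≃ Fin (2 * m)) : Equiv.Perm (Fin (2 * (2 * m))) :=
  (pairEquiv _).symm.trans <| ((pairEquiv m).symm.prodCongr (.refl _)).trans <|
    (prodSwapRight _ _ _).trans <| (ψ.prodCongr (.refl _)).trans (pairEquiv _)

@[simp] lemma codePerm_pairEquiv_pairEquiv {m : ℕ} (ψ : Fin m × Fin 2 ≃ Fin (2 * m))
    (i : Fin m) (r r' : Fin 2) :
    codePerm ψ (pairEquiv _ (pairEquiv m (i, r), r')) = pairEquiv _ (ψ (i, r'), r) := by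
  simp [codePerm, prodSwapRight]

section Transport

variable {m : ℕ} {ψ : Fin m × Fin 2 ≃ Fin (2 * m)} {t : Fin m → Fin (2 * m) → ZMod 2}
  (hψ : ∀ i q, t i (ψ q) = if q.1 = i then 1 else 0)
include hψ

lemma dbl_comp_codePerm (j : Fin m) :
    dbl (t j) ∘ codePerm ψ =
      dbl (Pi.single (pairEquiv m (j, 0)) 1 - Pi.single (pairEquiv m (j, 1)) 1) := by
  refine funext_pairEquiv_pairEquiv fun i r r' => ?_
  fin_cases r <;> simp [hψ, Pi.single_apply, (pairEquiv m).injective.eq_iff]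

lemma emap_comp_codePerm {s : Fin (2 * m) → ZMod 2} {j j' : Fin m} (hs : s = t j + t j') :
    emap s ∘ codePerm ψ =
      dbl (Pi.single (pairEquiv m (j, 1)) 1 - Pi.single (pairEquiv m (j', 1)) 1) := by
  refine funext_pairEquiv_pairEquiv fun i r r' => ?_
  fin_cases r <;> simp [hs, hψ, Pi.single_apply, (pairEquiv m).injective.eq_iff]
  rw [sub_eq_add_neg, ZMod.neg_eq_self_mod_two]

lemma image_comp_codePerm {s : Fin (m - 1) → Fin (2 * m) → ZMod 2}
    (hst : ∀ i : Fin (m - 1),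
      s i = t ⟨(i : ℕ), by have := i.isLt; omega⟩ + t ⟨(i : ℕ) + 1, by have := i.isLt; omega⟩) :
    (· ∘ codePerm ψ) '' (Set.range (fun i => dbl (t i)) ∪ Set.range (fun j => emap (s j))) =
      dbl '' combEdges (ZMod 2) m := by
  simp only [combEdges, Set.image_union, ← Set.range_comp]
  congr 2 <;> funext j
  · exact dbl_comp_codePerm hψ j
  · exact emap_comp_codePerm hψ (hst j)

end Transport

end BinaryCode

open BinaryCode

/-- (Lemma 7.1 of the paper, with `n = 2m` even) given weight-4 vectors
`s₁,…,s_{m−1}` in `F₂^{2m}` with `|sᵢ ∩ sⱼ| = 2` for `|i−j| = 1` and `= 0` otherwise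
(`i ≠ j`), and weight-2 vectors `t₁,…,t_m` with `sᵢ = tᵢ + tᵢ₊₁`, the span of the
`d(tᵢ)` and `e(sⱼ)` is isomorphic, via a coordinate permutation, to `d(𝓔ₙ)`. -/
theorem span_dbl_emap_equiv_dblEven (m : ℕ) (hm : 1 ≤ m)
    (s : Fin (m - 1) → Fin (2 * m) → ZMod 2) (t : Fin m → Fin (2 * m) → ZMod 2)
    (hs4 : ∀ i, wt (s i) = 4) (ht2 : ∀ i, wt (t i) = 2)
    (hst : ∀ i : Fin (m - 1),
      s i = t ⟨(i : ℕ), by have := i.isLt; omega⟩ + t ⟨(i : ℕ) + 1, by have := i.isLt; omega⟩)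
    (hint : ∀ i j : Fin (m - 1), i ≠ j →
      interCard (s i) (s j) =
        if (i : ℕ) + 1 = (j : ℕ) ∨ (j : ℕ) + 1 = (i : ℕ) then 2 else 0) :
    ∃ σ : Equiv.Perm (Fin (2 * (2 * m))),
      (fun v : Fin (2 * (2 * m)) → ZMod 2 => v ∘ σ) ''
          ↑(Submodule.span (ZMod 2)
            (Set.range (fun i => dbl (t i)) ∪ Set.range (fun j => emap (s j)))) =
        dbl '' evenCode (2 * m) := by
  obtain ⟨ψ, hψ⟩ := exists_prod_equiv_apply_eq_ite (by simp [Nat.mul_comm]) ht2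
    (pairwise_disjoint_supp hs4 ht2 hst hint)
  refine ⟨codePerm ψ, ?_⟩
  calc
    _ = ↑((Submodule.span (ZMod 2) _).map
          (LinearMap.funLeft (ZMod 2) (ZMod 2) (codePerm ψ))) := (Submodule.map_coe _ _).symm
    _ = ↑((Submodule.span (ZMod 2) (combEdges (ZMod 2) m)).map (dblLinear (2 * m))) := by
      rw [Submodule.map_span, Submodule.map_span]
      exact congrArg _ (congrArg _ (image_comp_codePerm hψ hst))
    _ = dbl '' evenCode (2 * m) := by
      ext v
      simp [mem_span_combEdges_iff hm, mem_evenCode_iff]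
end

section
/- Let C_0 ⊆ F_2^n have minimum weight at least 4 and set C = Span{d(E_n), e(C_0)}. For weight-4 codewords u = e(y) + d(z) (with y ∈ C_0 of weight 4, z ∈ E_n, supp(z) ⊆ supp(y)) and d(x) (with x ∈ E_n of weight 2) of C: |supp(u) ∩ supp(d(x))| = 0 if and only if supp(x) ∩ supp(y) = ∅, and |supp(u) ∩ supp(d(x))| = 2 if and only if supp(x) ⊆ supp(y). -/
lemma zmod2_contra (a b : ZMod 2) (h1 : a ≠ 0) (h2 : b ≠ 0) (h3 : a + b ≠ 0) : False := by
  revert h1 h2 h3; revert a b; decide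

lemma dbl_even {n : ℕ} (c : Fin n → ZMod 2) (j : Fin n) (h : 2 * (j : ℕ) < 2 * n) :
    dbl c ⟨2 * (j : ℕ), h⟩ = c j := by
  unfold dbl; congr 1; apply Fin.ext; show (2 * (j : ℕ)) / 2 = (j : ℕ); omega

lemma dbl_odd {n : ℕ} (c : Fin n → ZMod 2) (j : Fin n) (h : 2 * (j : ℕ) + 1 < 2 * n) :
    dbl c ⟨2 * (j : ℕ) + 1, h⟩ = c j := by
  unfold dbl; congr 1; apply Fin.ext; show (2 * (j : ℕ) + 1) / 2 = (j : ℕ); omega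

lemma emap_even {n : ℕ} (c : Fin n → ZMod 2) (j : Fin n) (h : 2 * (j : ℕ) < 2 * n) :
    emap c ⟨2 * (j : ℕ), h⟩ = 0 := by
  unfold emap; rw [if_neg]; show ¬ (2 * (j : ℕ)) % 2 = 1; omega

lemma emap_odd {n : ℕ} (c : Fin n → ZMod 2) (j : Fin n) (h : 2 * (j : ℕ) + 1 < 2 * n) :
    emap c ⟨2 * (j : ℕ) + 1, h⟩ = c j := by
  unfold emap
  rw [if_pos (by omega : (2 * (j : ℕ) + 1) % 2 = 1)]
  congr 1; apply Fin.ext; show (2 * (j : ℕ) + 1) / 2 = (j : ℕ); omega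

lemma zmod2_add_ne (a b : ZMod 2) (h : a ≠ 0) (h' : b ≠ 0) : a + b = 0 := by
  revert h h'; revert a b; decide

lemma key_interCard {n : ℕ} (y z x : Fin n → ZMod 2)
    (hzy : ∀ i, z i ≠ 0 → y i ≠ 0) :
    interCard (emap y + dbl z) (dbl x) = interCard x y := by
  classical
  unfold interCard
  -- auxiliary: membership of the big filter implies y (i/2) ≠ 0
  have hu : ∀ i : Fin (2 * n), (emap y + dbl z) i ≠ 0 →
      y ⟨(i : ℕ) / 2, by have := i.isLt; omega⟩ ≠ 0 := by
    intro i hi hy0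
    simp only [Pi.add_apply, emap, dbl] at hi
    by_cases hp : (i : ℕ) % 2 = 1
    · rw [if_pos hp] at hi
      have hz0 : z ⟨(i : ℕ) / 2, by have := i.isLt; omega⟩ = 0 := by
        by_contra hz0; exact (hzy _ hz0) hy0
      rw [hy0, hz0] at hi; simp at hi
    · rw [if_neg hp, zero_add] at hi
      exact hzy _ hi hy0
  refine Finset.card_bij (fun i _ => ⟨(i : ℕ) / 2, by have := i.isLt; omega⟩) ?_ ?_ ?_
  · intro i hi
    simp only [Finset.mem_filter, Finset.mem_univ, true_and] at hi ⊢
    exact ⟨hi.2, hu i hi.1⟩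
  · intro i₁ h₁ i₂ h₂ heq
    simp only [Finset.mem_filter, Finset.mem_univ, true_and] at h₁ h₂
    by_contra hne
    have hv : ((i₁ : ℕ)) / 2 = ((i₂ : ℕ)) / 2 := congrArg Fin.val heq
    have hne' : (i₁ : ℕ) ≠ (i₂ : ℕ) := fun h => hne (Fin.ext h)
    -- one of them is even, the other odd, same quotient
    have hpar : (i₁ : ℕ) % 2 ≠ (i₂ : ℕ) % 2 := by omega
    -- wlog: the two values are z j and y j + z j; both nonzero impossible
    have hy1 := hu i₁ h₁.1
    set j : Fin n := ⟨(i₁ : ℕ) / 2, by have := i₁.isLt; omega⟩ with hj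
    have hj2 : (⟨(i₂ : ℕ) / 2, by have := i₂.isLt; omega⟩ : Fin n) = j := by
      apply Fin.ext; simp [hj, hv]
    have e₁ := h₁.1
    have e₂ := h₂.1
    simp only [Pi.add_apply, emap, dbl] at e₁ e₂
    rw [hj2] at e₂
    rcases Nat.mod_two_eq_zero_or_one (i₁ : ℕ) with hp1 | hp1 <;>
      rcases Nat.mod_two_eq_zero_or_one (i₂ : ℕ) with hp2 | hp2
    · exact hpar (by omega)
    · rw [if_neg (by omega), zero_add] at e₁
      rw [if_pos hp2] at e₂
      exact zmod2_contra (y j) (z j) hy1 e₁ e₂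
    · rw [if_pos hp1] at e₁
      rw [if_neg (by omega), zero_add] at e₂
      exact zmod2_contra (y j) (z j) hy1 e₂ e₁
    · exact hpar (by omega)
  · intro j hj
    simp only [Finset.mem_filter, Finset.mem_univ, true_and] at hj
    by_cases hzj : z j ≠ 0
    · refine ⟨⟨2 * (j : ℕ), by have := j.isLt; omega⟩, ?_, ?_⟩
      · simp only [Finset.mem_filter, Finset.mem_univ, true_and, Pi.add_apply]
        rw [emap_even, dbl_even, dbl_even, zero_add]
        exact ⟨hzj, hj.1⟩
      · apply Fin.ext
        show 2 * (j : ℕ) / 2 = (j : ℕ); omega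
    · rw [not_ne_iff] at hzj
      refine ⟨⟨2 * (j : ℕ) + 1, by have := j.isLt; omega⟩, ?_, ?_⟩
      · simp only [Finset.mem_filter, Finset.mem_univ, true_and, Pi.add_apply]
        rw [emap_odd, dbl_odd, dbl_odd, hzj, add_zero]
        exact ⟨hj.2, hj.1⟩
      · apply Fin.ext
        show (2 * (j : ℕ) + 1) / 2 = (j : ℕ); omega

/-- with `C₀` of minimum weight at least 4, `u = e(y) + d(z)` a weight-4
codeword of `C = Span{d(𝓔ₙ), e(C₀)}` (with `y ∈ C₀` of weight 4, `z ∈ 𝓔ₙ`,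
`supp z ⊆ supp y`) and `d(x)` with `x ∈ 𝓔ₙ` of weight 2:
`|supp u ∩ supp (d x)| = 0` iff `supp x ∩ supp y = ∅`, and
`|supp u ∩ supp (d x)| = 2` iff `supp x ⊆ supp y`. -/
theorem interCard_emap_dbl (n : ℕ)
    (C₀ : Submodule (ZMod 2) (Fin n → ZMod 2))
    (hmin : ∀ y ∈ C₀, y ≠ 0 → 4 ≤ wt y)
    (y : Fin n → ZMod 2) (hy : y ∈ C₀) (hy4 : wt y = 4)
    (z : Fin n → ZMod 2) (hz : z ∈ evenCode n) (hzy : ∀ i, z i ≠ 0 → y i ≠ 0)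
    (x : Fin n → ZMod 2) (hx : x ∈ evenCode n) (hx2 : wt x = 2) :
    (interCard (emap y + dbl z) (dbl x) = 0 ↔ ∀ i, ¬(x i ≠ 0 ∧ y i ≠ 0)) ∧
    (interCard (emap y + dbl z) (dbl x) = 2 ↔ ∀ i, x i ≠ 0 → y i ≠ 0) := by
  classical
  rw [key_interCard y z x hzy]
  have hsub : (Finset.univ.filter (fun i => x i ≠ 0 ∧ y i ≠ 0)) ⊆
      (Finset.univ.filter (fun i => x i ≠ 0)) := by
    intro i hi
    simp only [Finset.mem_filter, Finset.mem_univ, true_and] at hi ⊢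
    exact hi.1
  have hx2' : (Finset.univ.filter (fun i => x i ≠ 0)).card = 2 := hx2
  constructor
  · show (Finset.univ.filter (fun i => x i ≠ 0 ∧ y i ≠ 0)).card = 0 ↔ _
    rw [Finset.card_eq_zero, Finset.filter_eq_empty_iff]
    simp
  · constructor
    · intro h2 i hxi
      have h2' : (Finset.univ.filter (fun i => x i ≠ 0 ∧ y i ≠ 0)).card = 2 := h2
      have heq : (Finset.univ.filter (fun i => x i ≠ 0 ∧ y i ≠ 0)) =
          (Finset.univ.filter (fun i => x i ≠ 0)) := by
        apply Finset.eq_of_subset_of_card_le hsub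
        omega
      have : i ∈ Finset.univ.filter (fun i => x i ≠ 0 ∧ y i ≠ 0) := by
        rw [heq]; simp [hxi]
      simp only [Finset.mem_filter] at this
      exact this.2.2
    · intro h
      show (Finset.univ.filter (fun i => x i ≠ 0 ∧ y i ≠ 0)).card = 2
      have heq : (Finset.univ.filter (fun i => x i ≠ 0 ∧ y i ≠ 0)) =
          (Finset.univ.filter (fun i => x i ≠ 0)) := by
        apply Finset.filter_congr
        intro i _
        simp only [ne_eq]
        exact ⟨fun hh => hh.1, fun hh => ⟨hh, h i hh⟩⟩
      rw [heq]; exact hx2'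
end

section
/- Let C_0 ⊆ F_2^n have minimum weight at least 4 and set C = Span{d(E_n), e(C_0)}. If u = e(y) + d(z) and u' = e(y') + d(z') are weight-4 codewords of C with y, y' ∈ C_0 of weight 4, and |supp(u) ∩ supp(u')| = 2, then |supp(y) ∩ supp(y')| ∈ {2, 4}. -/
/-! A word `u = e(y) + d(z)` with `supp z ⊆ supp y` has at most one support position in
each block `{2k, 2k+1}`: if `z k = 1` then `y k = 1` and the odd entry `y k + z k` vanishes. Hence
`i ↦ i / 2` embeds `supp u ∩ supp u'` into `supp y ∩ supp y'`, so `|supp y ∩ supp y'| ≥ 2`. On the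
other hand `wt (y + y') = 8 - 2 |supp y ∩ supp y'|`, and `y + y' ∈ C₀` is either `0` or of weight
at least `4`. -/

lemma wt_add_add_two_mul_interCard {n : ℕ} (v w : Fin n → ZMod 2) :
    wt (v + w) + 2 * interCard v w = wt v + wt w := by
  simp only [wt, interCard, Finset.card_filter, Finset.mul_sum, ← Finset.sum_add_distrib]
  refine Finset.sum_congr rfl fun i _ => ?_
  have hpointwise : ∀ a b : ZMod 2,
      (if a + b ≠ 0 then 1 else 0) + 2 * (if a ≠ 0 ∧ b ≠ 0 then 1 else 0)
        = (if a ≠ 0 then 1 else 0) + (if b ≠ 0 then 1 else 0) := by decide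
  exact hpointwise (v i) (w i)

lemma interCard_self {n : ℕ} (v : Fin n → ZMod 2) : interCard v v = wt v := by
  simp only [wt, interCard, and_self]

lemma interCard_le_two_or_eq {n : ℕ} (C₀ : Submodule (ZMod 2) (Fin n → ZMod 2))
    (hmin : ∀ y ∈ C₀, y ≠ 0 → 4 ≤ wt y) {y y' : Fin n → ZMod 2} (hy : y ∈ C₀) (hy' : y' ∈ C₀)
    (hy4 : wt y = 4) (hy'4 : wt y' = 4) : interCard y y' ≤ 2 ∨ y = y' := by
  by_cases hsum : y + y' = 0
  · exact Or.inr (funext fun i => CharTwo.add_eq_zero.mp (congrFun hsum i))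
  · have := hmin _ (C₀.add_mem hy hy') hsum
    have := wt_add_add_two_mul_interCard y y'
    omega

def block {n : ℕ} (i : Fin (2 * n)) : Fin n :=
  ⟨i / 2, by omega⟩

section EmapAddDbl

variable {n : ℕ} {y z : Fin n → ZMod 2}

lemma emap_add_dbl_apply (i : Fin (2 * n)) :
    (emap y + dbl z) i = (if (i : ℕ) % 2 = 1 then y (block i) else 0) + z (block i) :=
  rfl

lemma ne_zero_of_emap_add_dbl_ne_zero (hzy : ∀ k, z k ≠ 0 → y k ≠ 0) {i : Fin (2 * n)}
    (hi : (emap y + dbl z) i ≠ 0) : y (block i) ≠ 0 := by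
  rw [emap_add_dbl_apply] at hi
  split_ifs at hi
  · intro hyk
    have hzk : z (block i) = 0 := by_contra fun hzk => hzy _ hzk hyk
    simp [hyk, hzk] at hi
  · exact hzy _ (by simpa using hi)

lemma block_injOn_support_emap_add_dbl (hzy : ∀ k, z k ≠ 0 → y k ≠ 0) :
    Set.InjOn block {i : Fin (2 * n) | (emap y + dbl z) i ≠ 0} := by
  have h01 : ∀ a : ZMod 2, a ≠ 0 → a = 1 := by decide
  have hclash : ∀ a b : Fin (2 * n), (a : ℕ) % 2 = 0 → (b : ℕ) % 2 = 1 → block a = block b →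
      (emap y + dbl z) a ≠ 0 → (emap y + dbl z) b = 0 := by
    intro a b ha hb hab hua
    rw [emap_add_dbl_apply, if_neg (by omega), zero_add] at hua
    rw [emap_add_dbl_apply, if_pos hb, ← hab, h01 _ hua, h01 _ (hzy _ hua)]
    decide
  intro i hi j hj hij
  have hval : (i : ℕ) / 2 = j / 2 := congrArg Fin.val hij
  rcases Nat.mod_two_eq_zero_or_one i with hi2 | hi2 <;>
    rcases Nat.mod_two_eq_zero_or_one j with hj2 | hj2
  · exact Fin.ext (by omega)
  · exact absurd (hclash i j hi2 hj2 hij hi) hj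
  · exact absurd (hclash j i hj2 hi2 hij.symm hj) hi
  · exact Fin.ext (by omega)

end EmapAddDbl

lemma interCard_emap_add_dbl_le {n : ℕ} {y y' z z' : Fin n → ZMod 2}
    (hzy : ∀ k, z k ≠ 0 → y k ≠ 0) (hzy' : ∀ k, z' k ≠ 0 → y' k ≠ 0) :
    interCard (emap y + dbl z) (emap y' + dbl z') ≤ interCard y y' := by
  refine Finset.card_le_card_of_injOn block (fun i hi => ?_) fun i hi j hj hij => ?_
  · simp only [Finset.coe_filter, Finset.mem_univ, true_and, Set.mem_ofPred_eq] at hi ⊢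
    exact ⟨ne_zero_of_emap_add_dbl_ne_zero hzy hi.1, ne_zero_of_emap_add_dbl_ne_zero hzy' hi.2⟩
  · simp only [Finset.coe_filter, Finset.mem_univ, true_and, Set.mem_ofPred_eq] at hi hj
    exact block_injOn_support_emap_add_dbl hzy hi.1 hj.1 hij

theorem interCard_two_implies_general (n : ℕ)
    (C₀ : Submodule (ZMod 2) (Fin n → ZMod 2))
    (hmin : ∀ y ∈ C₀, y ≠ 0 → 4 ≤ wt y)
    (y y' : Fin n → ZMod 2) (hy : y ∈ C₀) (hy' : y' ∈ C₀)
    (hy4 : wt y = 4) (hy'4 : wt y' = 4)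
    (z z' : Fin n → ZMod 2)
    (hzy : ∀ i, z i ≠ 0 → y i ≠ 0) (hzy' : ∀ i, z' i ≠ 0 → y' i ≠ 0)
    (hu : interCard (emap y + dbl z) (emap y' + dbl z') = 2) :
    interCard y y' = 2 ∨ interCard y y' = 4 := by
  have hge : 2 ≤ interCard y y' := hu ▸ interCard_emap_add_dbl_le hzy hzy'
  rcases interCard_le_two_or_eq C₀ hmin hy hy' hy4 hy'4 with hle | rfl
  · exact Or.inl (le_antisymm hle hge)
  · exact Or.inr (by rw [interCard_self, hy4])

/-- with `C₀` of minimum weight at least 4, if `u = e(y) + d(z)` and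
`u' = e(y') + d(z')` are weight-4 codewords of `C = Span{d(𝓔ₙ), e(C₀)}` with
`y, y' ∈ C₀` of weight 4 and `|supp u ∩ supp u'| = 2`, then `|supp y ∩ supp y'| ∈ {2, 4}`. -/
theorem interCard_two_implies (n : ℕ)
    (C₀ : Submodule (ZMod 2) (Fin n → ZMod 2))
    (hmin : ∀ y ∈ C₀, y ≠ 0 → 4 ≤ wt y)
    (y y' : Fin n → ZMod 2) (hy : y ∈ C₀) (hy' : y' ∈ C₀)
    (hy4 : wt y = 4) (hy'4 : wt y' = 4)
    (z z' : Fin n → ZMod 2) (hz : z ∈ evenCode n) (hz' : z' ∈ evenCode n)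
    (hzy : ∀ i, z i ≠ 0 → y i ≠ 0) (hzy' : ∀ i, z' i ≠ 0 → y' i ≠ 0)
    (hu : interCard (emap y + dbl z) (emap y' + dbl z') = 2) :
    interCard y y' = 2 ∨ interCard y y' = 4 :=
  interCard_two_implies_general n C₀ hmin y y' hy hy' hy4 hy'4 z z' hzy hzy' hu
end
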